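/- Let F = F₀ + F_v and G = G₀ + G_v be elements of ℍ_ℂ \ {0} whose vector parts satisfy F_v ≠ 0 and G_v ≠ 0. Then the Sylvester operator S_{F,G} has rank 2 (i.e., the range of the ℂ-linear endomorphism z ↦ Fz + zG of ℍ_ℂ has ℂ-dimension 2) if and only if F₀ + G₀ = 0 and F_v^s = G_v^s. -/

import Mathlib

open Quaternion

/-- The Sylvester operator `S_{F,G}(z) = Fz + zG` as a `ℂ`-linear endomorphism of the
complex quaternions. -/
noncomputable def sylvesterOp (F G : Quaternion ℂ) : Quaternion ℂ →ₗ[ℂ] Quaternion ℂ :=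
  @LinearMap.mulLeft ℂ _ _ _ Algebra.toModule Algebra.to_smulCommClass F +
    @LinearMap.mulRight ℂ _ _ _ Algebra.toModule IsScalarTower.right G

instance instSCC : SMulCommClass ℂ ℍ[ℂ] ℍ[ℂ] := @Algebra.to_smulCommClass ℂ ℍ[ℂ] _ _ _
instance instIST : IsScalarTower ℂ ℍ[ℂ] ℍ[ℂ] := @IsScalarTower.right ℂ ℍ[ℂ] _ _ _

namespace SylvesterAux

open LinearMap Module

set_option linter.unnecessarySeqFocus false

noncomputable def qI : Quaternion ℂ := ⟨0,1,0,0⟩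
noncomputable def qJ : Quaternion ℂ := ⟨0,0,1,0⟩
noncomputable def qK : Quaternion ℂ := ⟨0,0,0,1⟩

lemma re_mul' (a b : Quaternion ℂ) :
    (a * b).re = a.re * b.re - a.imI * b.imI - a.imJ * b.imJ - a.imK * b.imK :=
  Quaternion.re_mul a b
lemma imI_mul' (a b : Quaternion ℂ) :
    (a * b).imI = a.re * b.imI + a.imI * b.re + a.imJ * b.imK - a.imK * b.imJ :=
  Quaternion.imI_mul a b
lemma imJ_mul' (a b : Quaternion ℂ) :
    (a * b).imJ = a.re * b.imJ - a.imI * b.imK + a.imJ * b.re + a.imK * b.imI :=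
  Quaternion.imJ_mul a b
lemma imK_mul' (a b : Quaternion ℂ) :
    (a * b).imK = a.re * b.imK + a.imI * b.imJ - a.imJ * b.imI + a.imK * b.re :=
  Quaternion.imK_mul a b
lemma qI_re : qI.re = 0 := rfl
lemma qI_imI : qI.imI = 1 := rfl
lemma qI_imJ : qI.imJ = 0 := rfl
lemma qI_imK : qI.imK = 0 := rfl
lemma qJ_re : qJ.re = 0 := rfl
lemma qJ_imI : qJ.imI = 0 := rfl
lemma qJ_imJ : qJ.imJ = 1 := rfl
lemma qJ_imK : qJ.imK = 0 := rfl
lemma qK_re : qK.re = 0 := rfl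
lemma qK_imI : qK.imI = 0 := rfl
lemma qK_imJ : qK.imJ = 0 := rfl
lemma qK_imK : qK.imK = 1 := rfl

/-- simp set for componentwise computation -/
lemma trap (w : Quaternion ℂ) :
    w - qI * w * qI - qJ * w * qJ - qK * w * qK = ((4 * w.re : ℂ) : Quaternion ℂ) := by
  ext <;>
    simp [qI_re, qI_imI, qI_imJ, qI_imK, qJ_re, qJ_imI, qJ_imJ, qJ_imK, qK_re, qK_imI, qK_imJ, qK_imK, re_mul', imI_mul', imJ_mul',
      imK_mul'] <;> ring

lemma qI_mul_re (w : Quaternion ℂ) : (qI * w).re = -w.imI := by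
  simp [qI_re, qI_imI, qI_imJ, qI_imK, re_mul']

lemma qJ_mul_re (w : Quaternion ℂ) : (qJ * w).re = -w.imJ := by
  simp [qJ_re, qJ_imI, qJ_imJ, qJ_imK, re_mul']

lemma qK_mul_re (w : Quaternion ℂ) : (qK * w).re = -w.imK := by
  simp [qK_re, qK_imI, qK_imJ, qK_imK, re_mul']

/-- Cancellation of nonzero central scalars. -/
lemma coe_mul_cancel {a b : ℂ} {u : Quaternion ℂ} (hu : u ≠ 0)
    (h : (a : Quaternion ℂ) * u = (b : Quaternion ℂ) * u) : a = b := by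
  by_contra hab
  have hs : a - b ≠ 0 := sub_ne_zero.mpr hab
  apply hu
  have h1 := congrArg QuaternionAlgebra.re h
  have h2 := congrArg QuaternionAlgebra.imI h
  have h3 := congrArg QuaternionAlgebra.imJ h
  have h4 := congrArg QuaternionAlgebra.imK h
  simp only [re_mul', imI_mul', imJ_mul', imK_mul',
    Quaternion.re_coe, Quaternion.imI_coe, Quaternion.imJ_coe, Quaternion.imK_coe] at h1 h2 h3 h4
  ext
  · exact (mul_eq_zero.mp (by linear_combination h1 : (a - b) * u.re = 0)).resolve_left hs
  · exact (mul_eq_zero.mp (by linear_combination h2 : (a - b) * u.imI = 0)).resolve_left hs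
  · exact (mul_eq_zero.mp (by linear_combination h3 : (a - b) * u.imJ = 0)).resolve_left hs
  · exact (mul_eq_zero.mp (by linear_combination h4 : (a - b) * u.imK = 0)).resolve_left hs

lemma coe_mul_eq_zero {a : ℂ} {u : Quaternion ℂ} (ha : a ≠ 0)
    (h : (a : Quaternion ℂ) * u = 0) : u = 0 := by
  have : u = ((a⁻¹ : ℂ) : Quaternion ℂ) * ((a : Quaternion ℂ) * u) := by
    rw [← mul_assoc, ← Quaternion.coe_mul, inv_mul_cancel₀ ha, Quaternion.coe_one, one_mul]
  rw [this, h, mul_zero]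

/-- A nonzero two-sided ideal (as a submodule) of the complex quaternions is everything. -/
lemma ideal_eq_top (W : Submodule ℂ (Quaternion ℂ))
    (hr : ∀ z ∈ W, ∀ x : Quaternion ℂ, z * x ∈ W)
    (hl : ∀ z ∈ W, ∀ x : Quaternion ℂ, x * z ∈ W)
    {z : Quaternion ℂ} (hz : z ∈ W) (hz0 : z ≠ 0) : W = ⊤ := by
  have key : ∀ w ∈ W, ((4 * w.re : ℂ) : Quaternion ℂ) ∈ W := by
    intro w hw
    have h1 : qI * w * qI ∈ W := hr _ (hl _ hw qI) qI
    have h2 : qJ * w * qJ ∈ W := hr _ (hl _ hw qJ) qJ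
    have h3 : qK * w * qK ∈ W := hr _ (hl _ hw qK) qK
    have := W.sub_mem (W.sub_mem (W.sub_mem hw h1) h2) h3
    rwa [trap] at this
  have hex : ∃ w ∈ W, w.re ≠ 0 := by
    by_cases h0 : z.re ≠ 0
    · exact ⟨z, hz, h0⟩
    by_cases h1 : z.imI ≠ 0
    · exact ⟨qI * z, hl _ hz qI, by rw [qI_mul_re]; simpa using h1⟩
    by_cases h2 : z.imJ ≠ 0
    · exact ⟨qJ * z, hl _ hz qJ, by rw [qJ_mul_re]; simpa using h2⟩
    by_cases h3 : z.imK ≠ 0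
    · exact ⟨qK * z, hl _ hz qK, by rw [qK_mul_re]; simpa using h3⟩
    push_neg at h0 h1 h2 h3
    exact absurd (by ext <;> simp [h0, h1, h2, h3]) hz0
  obtain ⟨w, hw, hwre⟩ := hex
  have hw4 : (4 * w.re : ℂ) ≠ 0 := by simpa using hwre
  have h4 : (((4 * w.re)⁻¹ : ℂ) : Quaternion ℂ) * ((4 * w.re : ℂ) : Quaternion ℂ) ∈ W :=
    hl _ (key w hw) _
  rw [← Quaternion.coe_mul, inv_mul_cancel₀ hw4, Quaternion.coe_one] at h4
  rw [Submodule.eq_top_iff']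
  intro x
  simpa using hl 1 h4 x

lemma two_le_finrank_range_mulLeft {u : Quaternion ℂ} (hu : u ≠ 0) :
    2 ≤ finrank ℂ (LinearMap.range (LinearMap.mulLeft ℂ u)) := by
  by_contra h
  push_neg at h
  have hle : finrank ℂ (LinearMap.range (LinearMap.mulLeft ℂ u)) ≤ 1 := by omega
  have husp : (ℂ ∙ u) ≤ LinearMap.range (LinearMap.mulLeft ℂ u) := by
    rw [Submodule.span_singleton_le_iff_mem]; exact ⟨1, mul_one u⟩
  have heq : (ℂ ∙ u) = LinearMap.range (LinearMap.mulLeft ℂ u) :=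
    Submodule.eq_of_le_of_finrank_le husp (by rw [finrank_span_singleton hu]; exact hle)
  have hmem : ∀ x : Quaternion ℂ, u * x ∈ (ℂ ∙ u) := fun x => heq ▸ ⟨x, rfl⟩
  obtain ⟨α, hα⟩ := Submodule.mem_span_singleton.mp (hmem qI)
  obtain ⟨β, hβ⟩ := Submodule.mem_span_singleton.mp (hmem qJ)
  have hα' : u * qI = (α : Quaternion ℂ) * u := by
    rw [Quaternion.coe_mul_eq_smul]; exact hα.symm
  have hβ' : u * qJ = (β : Quaternion ℂ) * u := by
    rw [Quaternion.coe_mul_eq_smul]; exact hβ.symm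
  have hα2 : α * α = -1 := by
    apply coe_mul_cancel hu
    have h1 : u * qI * qI = ((α * α : ℂ) : Quaternion ℂ) * u := by
      rw [hα', mul_assoc, hα', ← mul_assoc, ← Quaternion.coe_mul]
    have h2 : u * qI * qI = ((-1 : ℂ) : Quaternion ℂ) * u := by
      rw [mul_assoc]
      ext <;> simp [qI_re, qI_imI, qI_imJ, qI_imK, re_mul', imI_mul', imJ_mul',
        imK_mul'] <;> ring
    rw [← h1, h2]
  have hβ2 : β * β = -1 := by
    apply coe_mul_cancel hu
    have h1 : u * qJ * qJ = ((β * β : ℂ) : Quaternion ℂ) * u := by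
      rw [hβ', mul_assoc, hβ', ← mul_assoc, ← Quaternion.coe_mul]
    have h2 : u * qJ * qJ = ((-1 : ℂ) : Quaternion ℂ) * u := by
      rw [mul_assoc]
      ext <;> simp [qJ_re, qJ_imI, qJ_imJ, qJ_imK, re_mul', imI_mul', imJ_mul',
        imK_mul'] <;> ring
    rw [← h1, h2]
  have hk1 : u * qK = ((α * β : ℂ) : Quaternion ℂ) * u := by
    have hIJ : u * qK = u * qI * qJ := by
      rw [mul_assoc]
      congr 1
      ext <;> simp [qI_re, qI_imI, qI_imJ, qI_imK, qJ_re, qJ_imI, qJ_imJ, qJ_imK, qK_re, qK_imI, qK_imJ, qK_imK, re_mul', imI_mul', imJ_mul',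
        imK_mul']
    rw [hIJ, hα', mul_assoc, hβ', ← mul_assoc, ← Quaternion.coe_mul]
  have hk2 : u * qK = ((-(β * α) : ℂ) : Quaternion ℂ) * u := by
    have hJI : u * qK = -(u * qJ * qI) := by
      ext <;> simp [qI_re, qI_imI, qI_imJ, qI_imK, qJ_re, qJ_imI, qJ_imJ, qJ_imK, qK_re, qK_imI, qK_imJ, qK_imK, re_mul', imI_mul', imJ_mul',
        imK_mul']
    have h2 : u * qJ * qI = ((β * α : ℂ) : Quaternion ℂ) * u := by
      rw [hβ', mul_assoc, hα', ← mul_assoc, ← Quaternion.coe_mul]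
    rw [hJI, h2]
    ext <;> simp
  have h5 : α * β = -(β * α) := coe_mul_cancel hu (hk1.symm.trans hk2)
  have hαβ : α * β = 0 := by linear_combination h5 / 2
  rcases mul_eq_zero.mp hαβ with h' | h'
  · rw [h'] at hα2; exact absurd hα2 (by norm_num)
  · rw [h'] at hβ2; exact absurd hβ2 (by norm_num)

lemma two_le_finrank_range_mulRight {u : Quaternion ℂ} (hu : u ≠ 0) :
    2 ≤ finrank ℂ (LinearMap.range (LinearMap.mulRight ℂ u)) := by
  by_contra h
  push_neg at h
  have hle : finrank ℂ (LinearMap.range (LinearMap.mulRight ℂ u)) ≤ 1 := by omega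
  have husp : (ℂ ∙ u) ≤ LinearMap.range (LinearMap.mulRight ℂ u) := by
    rw [Submodule.span_singleton_le_iff_mem]; exact ⟨1, one_mul u⟩
  have heq : (ℂ ∙ u) = LinearMap.range (LinearMap.mulRight ℂ u) :=
    Submodule.eq_of_le_of_finrank_le husp (by rw [finrank_span_singleton hu]; exact hle)
  have hmem : ∀ x : Quaternion ℂ, x * u ∈ (ℂ ∙ u) := fun x => heq ▸ ⟨x, rfl⟩
  obtain ⟨α, hα⟩ := Submodule.mem_span_singleton.mp (hmem qI)
  obtain ⟨β, hβ⟩ := Submodule.mem_span_singleton.mp (hmem qJ)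
  have hα' : qI * u = (α : Quaternion ℂ) * u := by
    rw [Quaternion.coe_mul_eq_smul]; exact hα.symm
  have hβ' : qJ * u = (β : Quaternion ℂ) * u := by
    rw [Quaternion.coe_mul_eq_smul]; exact hβ.symm
  have hcomm : ∀ (a : ℂ) (x : Quaternion ℂ), x * (a : Quaternion ℂ) = (a : Quaternion ℂ) * x :=
    fun a x => (Quaternion.coe_commutes a x).symm
  have hα2 : α * α = -1 := by
    apply coe_mul_cancel hu
    have h1 : qI * (qI * u) = ((α * α : ℂ) : Quaternion ℂ) * u := by
      rw [hα', ← mul_assoc, hcomm, mul_assoc, hα', ← mul_assoc, ← Quaternion.coe_mul]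
    have h2 : qI * (qI * u) = ((-1 : ℂ) : Quaternion ℂ) * u := by
      rw [← mul_assoc]
      ext <;> simp [qI_re, qI_imI, qI_imJ, qI_imK, re_mul', imI_mul', imJ_mul',
        imK_mul'] <;> ring
    rw [← h1, h2]
  have hβ2 : β * β = -1 := by
    apply coe_mul_cancel hu
    have h1 : qJ * (qJ * u) = ((β * β : ℂ) : Quaternion ℂ) * u := by
      rw [hβ', ← mul_assoc, hcomm, mul_assoc, hβ', ← mul_assoc, ← Quaternion.coe_mul]
    have h2 : qJ * (qJ * u) = ((-1 : ℂ) : Quaternion ℂ) * u := by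
      rw [← mul_assoc]
      ext <;> simp [qJ_re, qJ_imI, qJ_imJ, qJ_imK, re_mul', imI_mul', imJ_mul',
        imK_mul'] <;> ring
    rw [← h1, h2]
  have hk1 : qK * u = ((β * α : ℂ) : Quaternion ℂ) * u := by
    have hIJ : qK * u = qI * (qJ * u) := by
      rw [← mul_assoc]
      congr 1
      ext <;> simp [qI_re, qI_imI, qI_imJ, qI_imK, qJ_re, qJ_imI, qJ_imJ, qJ_imK, qK_re, qK_imI, qK_imJ, qK_imK, re_mul', imI_mul', imJ_mul',
        imK_mul']
    rw [hIJ, hβ', ← mul_assoc, hcomm, mul_assoc, hα', ← mul_assoc, ← Quaternion.coe_mul]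
  have hk2 : qK * u = ((-(α * β) : ℂ) : Quaternion ℂ) * u := by
    have hJI : qK * u = -(qJ * (qI * u)) := by
      ext <;> simp [qI_re, qI_imI, qI_imJ, qI_imK, qJ_re, qJ_imI, qJ_imJ, qJ_imK, qK_re, qK_imI, qK_imJ, qK_imK, re_mul', imI_mul', imJ_mul',
        imK_mul']
    have h2 : qJ * (qI * u) = ((α * β : ℂ) : Quaternion ℂ) * u := by
      rw [hα', ← mul_assoc, hcomm, mul_assoc, hβ', ← mul_assoc, ← Quaternion.coe_mul]
    rw [hJI, h2]
    ext <;> simp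
  have h5 : β * α = -(α * β) := coe_mul_cancel hu (hk1.symm.trans hk2)
  have hαβ : α * β = 0 := by linear_combination h5 / 2
  rcases mul_eq_zero.mp hαβ with h' | h'
  · rw [h'] at hα2; exact absurd hα2 (by norm_num)
  · rw [h'] at hβ2; exact absurd hβ2 (by norm_num)

lemma finrank_ker_mulLeft_le {u : Quaternion ℂ} (hu : u ≠ 0) :
    finrank ℂ (LinearMap.ker (LinearMap.mulLeft ℂ u)) ≤ 2 := by
  have h4 : finrank ℂ (Quaternion ℂ) = 4 := Quaternion.finrank_eq_four (R := ℂ)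
  have hrn := LinearMap.finrank_range_add_finrank_ker (LinearMap.mulLeft ℂ u)
  rw [h4] at hrn
  have h2 := two_le_finrank_range_mulLeft hu
  omega

lemma finrank_ker_mulRight_le {u : Quaternion ℂ} (hu : u ≠ 0) :
    finrank ℂ (LinearMap.ker (LinearMap.mulRight ℂ u)) ≤ 2 := by
  have h4 : finrank ℂ (Quaternion ℂ) = 4 := Quaternion.finrank_eq_four (R := ℂ)
  have hrn := LinearMap.finrank_range_add_finrank_ker (LinearMap.mulRight ℂ u)
  rw [h4] at hrn
  have h2 := two_le_finrank_range_mulRight hu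
  omega

lemma finrank_inf_le_one {u x : Quaternion ℂ} (hu : u ≠ 0) (hx : x ≠ 0) :
    finrank ℂ ((LinearMap.ker (LinearMap.mulLeft ℂ u)) ⊓
      (LinearMap.ker (LinearMap.mulRight ℂ x)) : Submodule ℂ (Quaternion ℂ)) ≤ 1 := by
  by_contra h
  push_neg at h
  have h2 : 2 ≤ finrank ℂ ((LinearMap.ker (LinearMap.mulLeft ℂ u)) ⊓
      (LinearMap.ker (LinearMap.mulRight ℂ x)) : Submodule ℂ (Quaternion ℂ)) := h
  have heqL : ((LinearMap.ker (LinearMap.mulLeft ℂ u)) ⊓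
      (LinearMap.ker (LinearMap.mulRight ℂ x)) : Submodule ℂ (Quaternion ℂ)) =
      LinearMap.ker (LinearMap.mulLeft ℂ u) :=
    Submodule.eq_of_le_of_finrank_le inf_le_left (le_trans (finrank_ker_mulLeft_le hu) h2)
  have heqR : ((LinearMap.ker (LinearMap.mulLeft ℂ u)) ⊓
      (LinearMap.ker (LinearMap.mulRight ℂ x)) : Submodule ℂ (Quaternion ℂ)) =
      LinearMap.ker (LinearMap.mulRight ℂ x) :=
    Submodule.eq_of_le_of_finrank_le inf_le_right (le_trans (finrank_ker_mulRight_le hx) h2)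
  have hRL : LinearMap.ker (LinearMap.mulRight ℂ x) = LinearMap.ker (LinearMap.mulLeft ℂ u) := by
    rw [← heqL, heqR]
  have hr : ∀ z ∈ LinearMap.ker (LinearMap.mulLeft ℂ u), ∀ y : Quaternion ℂ,
      z * y ∈ LinearMap.ker (LinearMap.mulLeft ℂ u) := by
    intro z hz y
    rw [LinearMap.mem_ker, LinearMap.mulLeft_apply] at hz ⊢
    rw [← mul_assoc, hz, zero_mul]
  have hl : ∀ z ∈ LinearMap.ker (LinearMap.mulLeft ℂ u), ∀ y : Quaternion ℂ,
      y * z ∈ LinearMap.ker (LinearMap.mulLeft ℂ u) := by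
    intro z hz y
    rw [← hRL] at hz ⊢
    rw [LinearMap.mem_ker, LinearMap.mulRight_apply] at hz ⊢
    rw [mul_assoc, hz, mul_zero]
  have hbot : LinearMap.ker (LinearMap.mulLeft ℂ u) ≠ ⊥ := by
    intro hb
    rw [← heqL] at hb
    rw [hb, finrank_bot] at h2
    omega
  obtain ⟨z, hz, hz0⟩ := Submodule.exists_mem_ne_zero_of_ne_bot hbot
  have htop := ideal_eq_top _ hr hl hz hz0
  have h1 : (1 : Quaternion ℂ) ∈ LinearMap.ker (LinearMap.mulLeft ℂ u) := by
    rw [htop]; trivial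
  rw [LinearMap.mem_ker, LinearMap.mulLeft_apply, mul_one] at h1
  exact hu h1

lemma pure_sq (q : Quaternion ℂ) (h : q.re = 0) :
    q * q = ((-(normSq q) : ℂ) : Quaternion ℂ) := by
  ext <;>
    simp [re_mul', imI_mul', imJ_mul', imK_mul',
      Quaternion.normSq_def', ← Quaternion.coe_pow, h] <;> ring

lemma pure_add_coe_ne {v : Quaternion ℂ} (hvre : v.re = 0) (hv : v ≠ 0) (t : ℂ) :
    v + (t : Quaternion ℂ) ≠ 0 := by
  intro h
  apply hv
  have hI : v.imI = 0 := by have := congrArg QuaternionAlgebra.imI h; simpa using this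
  have hJ : v.imJ = 0 := by have := congrArg QuaternionAlgebra.imJ h; simpa using this
  have hK : v.imK = 0 := by have := congrArg QuaternionAlgebra.imK h; simpa using this
  ext <;> simp [hvre, hI, hJ, hK]

lemma pure_sub_coe_ne {v : Quaternion ℂ} (hvre : v.re = 0) (hv : v ≠ 0) (t : ℂ) :
    v - (t : Quaternion ℂ) ≠ 0 := by
  have h := pure_add_coe_ne hvre hv (-t)
  intro h'
  apply h
  rw [← h']
  ext <;> simp [sub_eq_add_neg]

set_option maxHeartbeats 1600000 in
/-- The key dimension bound: the kernel of `z ↦ v z + z w` for pure nonzero `v, w`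
with `v² = w²` has dimension at most 2. -/
lemma finrank_ker_add_le_two {v w : Quaternion ℂ} (hv : v ≠ 0) (hw : w ≠ 0)
    (hvre : v.re = 0) (hwre : w.re = 0) (hvw : v * v = w * w) :
    finrank ℂ (LinearMap.ker (LinearMap.mulLeft ℂ v + LinearMap.mulRight ℂ w)) ≤ 2 := by
  obtain ⟨t, ht⟩ : ∃ t : ℂ, t ^ 2 = -(normSq v) :=
    IsAlgClosed.exists_pow_nat_eq _ (by norm_num)
  have hvv : v * v = ((-(normSq v) : ℂ) : Quaternion ℂ) := pure_sq v hvre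
  have htt : ((t * t : ℂ) : Quaternion ℂ) = ((-(normSq v) : ℂ) : Quaternion ℂ) := by
    congr 1
    linear_combination ht
  set K := LinearMap.ker (LinearMap.mulLeft ℂ v + LinearMap.mulRight ℂ w) with hK
  have hKmem : ∀ z : Quaternion ℂ, z ∈ K → v * z + z * w = 0 := by
    intro z hz
    rw [hK, LinearMap.mem_ker, LinearMap.add_apply, LinearMap.mulLeft_apply,
      LinearMap.mulRight_apply] at hz
    exact hz
  let ψ : K →ₗ[ℂ] Quaternion ℂ := (LinearMap.mulLeft ℂ (v + (t : Quaternion ℂ))).comp K.subtype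
  have hrn := LinearMap.finrank_range_add_finrank_ker (K := ℂ) (V := K) (V₂ := Quaternion ℂ) ψ
  have hrange : LinearMap.range ψ ≤
      (LinearMap.ker (LinearMap.mulLeft ℂ (v - (t : Quaternion ℂ)))) ⊓
      (LinearMap.ker (LinearMap.mulRight ℂ (w + (t : Quaternion ℂ)))) := by
    rintro y ⟨⟨z, hz⟩, rfl⟩
    have hz0 : v * z + z * w = 0 := hKmem z hz
    have hy : ψ ⟨z, hz⟩ = (v + (t : Quaternion ℂ)) * z := rfl
    refine Submodule.mem_inf.mpr ⟨?_, ?_⟩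
    · rw [LinearMap.mem_ker, LinearMap.mulLeft_apply, hy]
      have hid : (v - (t : Quaternion ℂ)) * ((v + (t : Quaternion ℂ)) * z) =
          (v * v) * z - ((t * t : ℂ) : Quaternion ℂ) * z := by
        ext <;> simp [re_mul', imI_mul', imJ_mul',
          imK_mul'] <;> ring
      rw [hid, hvv, htt, sub_self]
    · rw [LinearMap.mem_ker, LinearMap.mulRight_apply, hy]
      have hid : ((v + (t : Quaternion ℂ)) * z) * (w + (t : Quaternion ℂ)) =
          (v + (t : Quaternion ℂ)) * (v * z + z * w) - (v * v) * z +
            ((t * t : ℂ) : Quaternion ℂ) * z := by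
        ext <;> simp [re_mul', imI_mul', imJ_mul',
          imK_mul'] <;> ring
      rw [hid, hz0, mul_zero, zero_sub, hvv, htt, neg_add_cancel]
  have hker : Submodule.map K.subtype (LinearMap.ker ψ) ≤
      (LinearMap.ker (LinearMap.mulLeft ℂ (v + (t : Quaternion ℂ)))) ⊓
      (LinearMap.ker (LinearMap.mulRight ℂ (w - (t : Quaternion ℂ)))) := by
    rintro y ⟨⟨z, hzK⟩, hzker, rfl⟩
    have hz0 : v * z + z * w = 0 := hKmem z hzK
    have hψ : (v + (t : Quaternion ℂ)) * z = 0 := hzker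
    refine Submodule.mem_inf.mpr ⟨?_, ?_⟩
    · rw [LinearMap.mem_ker, LinearMap.mulLeft_apply]
      exact hψ
    · rw [LinearMap.mem_ker, LinearMap.mulRight_apply]
      have hid : (z : Quaternion ℂ) * (w - (t : Quaternion ℂ)) =
          (v * z + z * w) - (v + (t : Quaternion ℂ)) * z := by
        ext <;> simp [re_mul', imI_mul', imJ_mul',
          imK_mul'] <;> ring
      show (z : Quaternion ℂ) * (w - (t : Quaternion ℂ)) = 0
      rw [hid, hz0, hψ, sub_zero]
  have hr1 : finrank ℂ (LinearMap.range ψ) ≤ 1 :=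
    le_trans (Submodule.finrank_mono hrange)
      (finrank_inf_le_one (pure_sub_coe_ne hvre hv t) (pure_add_coe_ne hwre hw t))
  have hk1 : finrank ℂ (LinearMap.ker ψ) ≤ 1 := by
    rw [← Submodule.finrank_map_subtype_eq]
    exact le_trans (Submodule.finrank_mono hker)
      (finrank_inf_le_one (pure_add_coe_ne hvre hv t) (pure_sub_coe_ne hwre hw t))
  clear_value ψ
  omega

lemma normSq_decomp (q : Quaternion ℂ) : normSq q = q.re ^ 2 + normSq q.im := by
  simp [Quaternion.normSq_def', Quaternion.re_im, Quaternion.imI_im, Quaternion.imJ_im,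
    Quaternion.imK_im]
  ring

set_option maxHeartbeats 1600000 in
/-- The fundamental identity used to analyze the kernel of the Sylvester operator. -/
lemma key_identity (F G z : Quaternion ℂ) :
    ((2 * (F.re + G.re) : ℂ) : Quaternion ℂ) * (F * z) -
        ((normSq F - normSq G : ℂ) : Quaternion ℂ) * z =
      F * (F * z + z * G) - (F * z + z * G) * G +
        ((2 * G.re : ℂ) : Quaternion ℂ) * (F * z + z * G) := by
  ext <;>
    simp [re_mul', imI_mul', imJ_mul', imK_mul',
      Quaternion.normSq_def', ← Quaternion.coe_pow] <;> ring

lemma mem_ker_sylvester {F G z : Quaternion ℂ} (hz : z ∈ LinearMap.ker (sylvesterOp F G)) :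
    F * z + z * G = 0 := by
  rw [LinearMap.mem_ker, sylvesterOp, LinearMap.add_apply, LinearMap.mulLeft_apply,
    LinearMap.mulRight_apply] at hz
  exact hz

lemma key_eq {F G z : Quaternion ℂ} (hz : z ∈ LinearMap.ker (sylvesterOp F G)) :
    ((2 * (F.re + G.re) : ℂ) : Quaternion ℂ) * (F * z) =
      ((normSq F - normSq G : ℂ) : Quaternion ℂ) * z := by
  have hz0 : F * z + z * G = 0 := mem_ker_sylvester hz
  have hid := key_identity F G z
  rw [hz0, mul_zero, zero_mul, mul_zero, sub_zero, add_zero] at hid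
  exact sub_eq_zero.mp hid

end SylvesterAux

set_option maxHeartbeats 3200000 in
open SylvesterAux LinearMap Module in
/-- For `F`, `G` nonzero complex quaternions with nonzero vector parts, the
Sylvester operator `S_{F,G}` has rank `2` iff `F₀ + G₀ = 0` and `F_v^s = G_v^s`. -/
theorem sylvester_rank_two_iff (F G : Quaternion ℂ) (hF : F ≠ 0) (hG : G ≠ 0)
    (hFv : F.im ≠ 0) (hGv : G.im ≠ 0) :
    Module.finrank ℂ (LinearMap.range (sylvesterOp F G)) = 2 ↔
      F.re + G.re = 0 ∧ normSq F.im = normSq G.im := by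
  have h4 : finrank ℂ (Quaternion ℂ) = 4 := Quaternion.finrank_eq_four (R := ℂ)
  have hrn := LinearMap.finrank_range_add_finrank_ker (sylvesterOp F G)
  rw [h4] at hrn
  constructor
  · intro h2
    have hker : finrank ℂ (LinearMap.ker (sylvesterOp F G)) = 2 := by omega
    have ha : F.re + G.re = 0 := by
      by_contra ha
      have hc : (2 * (F.re + G.re) : ℂ) ≠ 0 := by
        simpa using ha
      set μ : ℂ := (2 * (F.re + G.re))⁻¹ * (normSq F - normSq G) with hμ
      have hFμ : F - (μ : Quaternion ℂ) ≠ 0 := by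
        intro h
        apply hFv
        have : F = (μ : Quaternion ℂ) := sub_eq_zero.mp h
        rw [this, Quaternion.im_coe]
      have hGμ : G + (μ : Quaternion ℂ) ≠ 0 := by
        intro h
        apply hGv
        have : G = -(μ : Quaternion ℂ) := eq_neg_of_add_eq_zero_left h
        rw [this]
        ext <;> simp
      have hsub : LinearMap.ker (sylvesterOp F G) ≤
          (LinearMap.ker (LinearMap.mulLeft ℂ (F - (μ : Quaternion ℂ)))) ⊓
          (LinearMap.ker (LinearMap.mulRight ℂ (G + (μ : Quaternion ℂ)))) := by
        intro z hz
        have hz0 : F * z + z * G = 0 := mem_ker_sylvester hz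
        have hkey := key_eq hz
        have hFz : F * z = (μ : Quaternion ℂ) * z := by
          have h5 : ((((2 * (F.re + G.re))⁻¹ : ℂ)) : Quaternion ℂ) *
              (((2 * (F.re + G.re) : ℂ) : Quaternion ℂ) * (F * z)) =
              ((((2 * (F.re + G.re))⁻¹ : ℂ)) : Quaternion ℂ) *
              (((normSq F - normSq G : ℂ) : Quaternion ℂ) * z) := by rw [hkey]
          rw [← mul_assoc, ← Quaternion.coe_mul, inv_mul_cancel₀ hc, Quaternion.coe_one,
            one_mul, ← mul_assoc, ← Quaternion.coe_mul] at h5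
          exact h5
        refine Submodule.mem_inf.mpr ⟨?_, ?_⟩
        · rw [LinearMap.mem_ker, LinearMap.mulLeft_apply]
          have hid : (F - (μ : Quaternion ℂ)) * z = F * z - (μ : Quaternion ℂ) * z := by
            ext <;> simp [re_mul', imI_mul', imJ_mul',
              imK_mul'] <;> ring
          rw [hid, hFz, sub_self]
        · rw [LinearMap.mem_ker, LinearMap.mulRight_apply]
          have hid : z * (G + (μ : Quaternion ℂ)) =
              (F * z + z * G) - (F * z - (μ : Quaternion ℂ) * z) := by
            ext <;> simp [re_mul', imI_mul', imJ_mul',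
              imK_mul'] <;> ring
          rw [hid, hz0, hFz, sub_self, sub_zero]
      have hle := le_trans (Submodule.finrank_mono hsub) (finrank_inf_le_one hFμ hGμ)
      omega
    refine ⟨ha, ?_⟩
    by_contra hq
    have hd : (normSq F - normSq G : ℂ) ≠ 0 := by
      have e1 := normSq_decomp F
      have e2 := normSq_decomp G
      have hGre : G.re = -F.re := eq_neg_of_add_eq_zero_right ha
      intro h
      apply hq
      rw [e1, e2, hGre] at h
      linear_combination h
    have hbot : LinearMap.ker (sylvesterOp F G) = ⊥ := by
      rw [Submodule.eq_bot_iff]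
      intro z hz
      have hkey := key_eq hz
      rw [ha] at hkey
      have h0 : ((normSq F - normSq G : ℂ) : Quaternion ℂ) * z = 0 := by
        rw [← hkey]
        ext <;> simp
      exact coe_mul_eq_zero hd h0
    rw [hbot, finrank_bot] at hker
    omega
  · rintro ⟨ha, hq⟩
    have hGre : G.re = -F.re := eq_neg_of_add_eq_zero_right ha
    have hS : sylvesterOp F G = LinearMap.mulLeft ℂ F.im + LinearMap.mulRight ℂ G.im := by
      apply LinearMap.ext
      intro z
      rw [sylvesterOp, LinearMap.add_apply, LinearMap.add_apply, LinearMap.mulLeft_apply,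
        LinearMap.mulRight_apply, LinearMap.mulLeft_apply, LinearMap.mulRight_apply]
      ext <;>
        simp [re_mul', imI_mul', imJ_mul', imK_mul',
          Quaternion.re_im, Quaternion.imI_im, Quaternion.imJ_im, Quaternion.imK_im, hGre] <;>
        ring
    have him : F.im * F.im = G.im * G.im := by
      rw [pure_sq F.im (Quaternion.re_im F), pure_sq G.im (Quaternion.re_im G), hq]
    have hmGv : -G.im ≠ 0 := neg_ne_zero.mpr hGv
    have hmGre : (-G.im).re = 0 := by simp [Quaternion.re_im]
    have hmm : F.im * F.im = (-G.im) * (-G.im) := by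
      rw [him]
      ext <;> simp <;> ring
    have hk1 : finrank ℂ (LinearMap.ker
        (LinearMap.mulLeft ℂ F.im + LinearMap.mulRight ℂ G.im)) ≤ 2 :=
      finrank_ker_add_le_two hFv hGv (Quaternion.re_im F) (Quaternion.re_im G) him
    have hk2 : finrank ℂ (LinearMap.ker
        (LinearMap.mulLeft ℂ F.im + LinearMap.mulRight ℂ (-G.im))) ≤ 2 :=
      finrank_ker_add_le_two hFv hmGv (Quaternion.re_im F) hmGre hmm
    have hcomp : (LinearMap.mulLeft ℂ F.im + LinearMap.mulRight ℂ G.im) ∘ₗ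
        (LinearMap.mulLeft ℂ F.im + LinearMap.mulRight ℂ (-G.im)) = 0 := by
      apply LinearMap.ext
      intro z
      rw [LinearMap.comp_apply, LinearMap.add_apply, LinearMap.mulLeft_apply,
        LinearMap.mulRight_apply, LinearMap.add_apply, LinearMap.mulLeft_apply,
        LinearMap.mulRight_apply, LinearMap.zero_apply]
      have hid : F.im * (F.im * z + z * -G.im) + (F.im * z + z * -G.im) * G.im =
          (F.im * F.im) * z - z * (G.im * G.im) := by
        ext <;> simp [re_mul', imI_mul', imJ_mul',
          imK_mul'] <;> ring
      rw [hid, him, pure_sq G.im (Quaternion.re_im G), Quaternion.coe_commutes, sub_self]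
    have hrange : LinearMap.range
        (LinearMap.mulLeft ℂ F.im + LinearMap.mulRight ℂ (-G.im)) ≤
        LinearMap.ker (LinearMap.mulLeft ℂ F.im + LinearMap.mulRight ℂ G.im) :=
      LinearMap.range_le_ker_iff.mpr hcomp
    have hrnD := LinearMap.finrank_range_add_finrank_ker
      (LinearMap.mulLeft ℂ F.im + LinearMap.mulRight ℂ (-G.im))
    rw [h4] at hrnD
    have hge : 2 ≤ finrank ℂ (LinearMap.ker
        (LinearMap.mulLeft ℂ F.im + LinearMap.mulRight ℂ G.im)) :=
      le_trans (by omega) (Submodule.finrank_mono hrange)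
    rw [hS] at hrn ⊢
    omega
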